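/- arXiv:math/0404425 — 2 statements merged into one kernel-verified Lean document; each statement's English description precedes it below -/
import Mathlib

section
/- Let M be an abelian group with an automorphism φ, m a positive integer, and t : ⊕_{i ∈ ℤ/m} M → ⊕_{i ∈ ℤ/m} M the map (t f)^{(i)} = φ(f^{(i-1)}). Define S_m : ⊕_{i ∈ ℤ/m} M → M by S_m(f) = Σ_{i ∈ ℤ/m} φ^{-\bar i}(f^{(i)}). Then S_m is surjective, and an element f lies in the image of t - 1 if and only if S_m(f) ∈ (1 - φ^{-m})M. In particular S_m induces an isomorphism coker(t-1) ≅ M/(1-φ^{-m})M. -/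
/-!
Modulo the image of `t - 1` one has `single (i + 1) (φ x) ≡ single i x`, so every `f` is
congruent to `single 0 (S_m f)`, and `single 0 (φ^{-m} x) ≡ single m x = single 0 x`; hence `f`
is in the image as soon as `S_m f ∈ (1 - φ^{-m})M`. Conversely `S_m ∘ t ≡ S_m` modulo
`(1 - φ^{-m})M`, as one checks on singles: only the wrap-around `-1 ↦ 0` changes the exponent
of `φ`, and it does so by `m`.
-/

open Function

namespace AddAut

variable {M : Type*} [AddCommGroup M] (φ : AddAut M) (m : ℕ)

def twistedShift : (ZMod m → M) →+ (ZMod m → M) where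
  toFun f i := φ (f (i - 1))
  map_zero' := by ext; simp
  map_add' f g := by ext; simp

def twistedSum [NeZero m] : (ZMod m → M) →+ M where
  toFun f := ∑ i : ZMod m, ((-(i.val : ℤ)) • φ) (f i)
  map_zero' := by simp
  map_add' f g := by simp [Finset.sum_add_distrib]

abbrev shiftCoboundaries : AddSubgroup (ZMod m → M) :=
  (twistedShift φ m - AddMonoidHom.id _).range

abbrev twistCoboundaries : AddSubgroup M :=
  (AddMonoidHom.id M - ((-(m : ℤ)) • φ).toAddMonoidHom).range

variable {φ m}

-- `AddAut M` is an additive group under composition, so `n • φ` is the power `φ ^ n`.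
lemma zsmul_apply_zsmul_apply (a b : ℤ) (x : M) :
    (a • φ) ((b • φ) x) = ((a + b) • φ) x := by
  rw [add_zsmul, add_apply]

@[simp]
lemma twistedShift_apply (f : ZMod m → M) (i : ZMod m) : twistedShift φ m f i = φ (f (i - 1)) :=
  rfl

lemma twistedShift_single (i : ZMod m) (x : M) :
    twistedShift φ m (Pi.single i x) = Pi.single (i + 1) (φ x) := by
  ext j
  by_cases h : j = i + 1
  · simp [h]
  · have : j - 1 ≠ i := fun h' => h (sub_eq_iff_eq_add.1 h')
    simp [h, this]

lemma mk_twistedShift (f : ZMod m → M) :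
    (twistedShift φ m f : _ ⧸ shiftCoboundaries φ m) = f :=
  QuotientAddGroup.eq_iff_sub_mem.2 ⟨f, rfl⟩

lemma mk_single_natCast (k : ℕ) (x : M) :
    ((Pi.single (k : ZMod m) x : ZMod m → M) : _ ⧸ shiftCoboundaries φ m) =
      (Pi.single 0 (((-(k : ℤ)) • φ) x) : ZMod m → M) := by
  induction k generalizing x with
  | zero => simp
  | succ k ih =>
    have hx : x = φ (((-1 : ℤ) • φ) x) := by
      rw [← add_apply, neg_one_zsmul, add_neg_cancel]; rfl
    rw [hx, Nat.cast_succ, ← twistedShift_single, mk_twistedShift, ih, zsmul_apply_zsmul_apply,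
      ← hx]
    push_cast
    ring_nf

lemma mk_zsmul_neg_apply (y : M) :
    (((-(m : ℤ)) • φ) y : M ⧸ twistCoboundaries φ m) = y :=
  ((QuotientAddGroup.eq_iff_sub_mem (N := twistCoboundaries φ m)).2 ⟨y, rfl⟩).symm

variable [NeZero m]

lemma twistedSum_apply (f : ZMod m → M) :
    twistedSum φ m f = ∑ i : ZMod m, ((-(i.val : ℤ)) • φ) (f i) :=
  rfl

lemma twistedSum_single (i : ZMod m) (x : M) :
    twistedSum φ m (Pi.single i x) = ((-(i.val : ℤ)) • φ) x := by
  rw [twistedSum_apply, Fintype.sum_eq_single i fun j hj => by simp [hj]]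
  simp

lemma twistedSum_surjective : Surjective (twistedSum φ m) :=
  fun x => ⟨Pi.single 0 x, by simp [twistedSum_single]⟩

lemma mk_eq_mk_single_twistedSum (f : ZMod m → M) :
    (f : _ ⧸ shiftCoboundaries φ m) = (Pi.single 0 (twistedSum φ m f) : ZMod m → M) := by
  have := AddMonoidHom.functions_ext _ (QuotientAddGroup.mk' (shiftCoboundaries φ m))
    ((QuotientAddGroup.mk' _).comp ((AddMonoidHom.single _ 0).comp (twistedSum φ m)))
    fun i x => by
      simpa [twistedSum_single, ZMod.natCast_zmod_val] using
        mk_single_natCast (φ := φ) (m := m) i.val x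
  exact DFunLike.congr_fun this f

lemma mk_twistedSum_single_add_one (i : ZMod m) (x : M) :
    (twistedSum φ m (Pi.single (i + 1) (φ x)) : M ⧸ twistCoboundaries φ m) =
      twistedSum φ m (Pi.single i x) := by
  have hφ : φ x = ((1 : ℤ) • φ) x := by rw [one_zsmul]
  rw [twistedSum_single, twistedSum_single]
  obtain ⟨k, hk, rfl⟩ : ∃ k < m, (k : ZMod m) = i := ⟨i.val, i.val_lt, i.natCast_zmod_val⟩
  rw [ZMod.val_cast_of_lt hk, ← Nat.cast_succ]
  rcases (Nat.succ_le_of_lt hk).lt_or_eq with hlt | heq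
  · rw [ZMod.val_cast_of_lt hlt, hφ, zsmul_apply_zsmul_apply]
    push_cast
    ring_nf
  · rw [heq, ZMod.natCast_self, ZMod.val_zero, hφ, zsmul_apply_zsmul_apply, ← heq,
      ← mk_zsmul_neg_apply (φ := φ) (m := k + 1), zsmul_apply_zsmul_apply]
    push_cast
    ring_nf

lemma mk_twistedSum_twistedShift (f : ZMod m → M) :
    (twistedSum φ m (twistedShift φ m f) : M ⧸ twistCoboundaries φ m) = twistedSum φ m f := by
  have := AddMonoidHom.functions_ext _
    (((QuotientAddGroup.mk' (twistCoboundaries φ m)).comp (twistedSum φ m)).comp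
      (twistedShift φ m))
    ((QuotientAddGroup.mk' _).comp (twistedSum φ m))
    fun i x => by
      simpa [twistedShift_single] using mk_twistedSum_single_add_one i x
  exact DFunLike.congr_fun this f

theorem mem_shiftCoboundaries_iff (f : ZMod m → M) :
    f ∈ shiftCoboundaries φ m ↔ twistedSum φ m f ∈ twistCoboundaries φ m := by
  constructor
  · rintro ⟨g, rfl⟩
    rw [← QuotientAddGroup.eq_zero_iff, AddMonoidHom.sub_apply, AddMonoidHom.id_apply, map_sub,
      QuotientAddGroup.mk_sub, mk_twistedSum_twistedShift, sub_self]
  · rintro ⟨x, hx⟩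
    rw [← QuotientAddGroup.eq_zero_iff, mk_eq_mk_single_twistedSum, ← hx, AddMonoidHom.sub_apply,
      Pi.single_sub, QuotientAddGroup.mk_sub, AddMonoidHom.id_apply, AddEquiv.coe_toAddMonoidHom,
      ← mk_single_natCast, ZMod.natCast_self, sub_self]

lemma ker_mk'_comp_twistedSum :
    ((QuotientAddGroup.mk' (twistCoboundaries φ m)).comp (twistedSum φ m)).ker =
      shiftCoboundaries φ m := by
  ext f
  rw [AddMonoidHom.mem_ker, AddMonoidHom.comp_apply, QuotientAddGroup.mk'_apply,
    QuotientAddGroup.eq_zero_iff, mem_shiftCoboundaries_iff]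

noncomputable def twistedSumQuotientEquiv :
    (ZMod m → M) ⧸ shiftCoboundaries φ m ≃+ M ⧸ twistCoboundaries φ m :=
  (QuotientAddGroup.quotientAddEquivOfEq ker_mk'_comp_twistedSum.symm).trans
    (QuotientAddGroup.quotientKerEquivOfSurjective _
      ((QuotientAddGroup.mk'_surjective _).comp twistedSum_surjective))

@[simp]
lemma twistedSumQuotientEquiv_mk (f : ZMod m → M) :
    twistedSumQuotientEquiv (f : _ ⧸ shiftCoboundaries φ m) =
      (twistedSum φ m f : M ⧸ twistCoboundaries φ m) :=
  rfl

end AddAut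

open AddAut in
/-- With `t` the twisted cyclic shift on `⊕_{i ∈ ℤ/m} M` and
`S_m(f) = ∑_i φ^{-\bar i}(f⁽ⁱ⁾)`, the map `S_m` is surjective, an element `f` lies in the
image of `t - 1` iff `S_m f ∈ (1 - φ^{-m})M`, and `S_m` induces an isomorphism
`coker (t - 1) ≅ M/(1 - φ^{-m})M`. -/
theorem stmt_2 (M : Type*) [AddCommGroup M] (φ : AddAut M) (m : ℕ) [NeZero m]
    (t : (ZMod m → M) →+ (ZMod m → M))
    (ht : ∀ (f : ZMod m → M) (i : ZMod m), t f i = φ (f (i - 1)))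
    (S : (ZMod m → M) →+ M)
    (hS : ∀ f : ZMod m → M, S f = ∑ i : ZMod m, ((-(i.val : ℤ)) • φ) (f i)) :
    Function.Surjective S ∧
    (∀ f : ZMod m → M,
      (∃ g : ZMod m → M, t g - g = f) ↔ ∃ x : M, S f = x - ((-(m : ℤ)) • φ) x) ∧
    ∃ ψ : ((ZMod m → M) ⧸ (t - AddMonoidHom.id (ZMod m → M)).range) ≃+
        (M ⧸ (AddMonoidHom.id M - ((-(m : ℤ)) • φ).toAddMonoidHom).range),
      ∀ f : ZMod m → M, ψ (QuotientAddGroup.mk f) = QuotientAddGroup.mk (S f) := by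
  obtain rfl : t = twistedShift φ m := AddMonoidHom.ext fun f => funext (ht f)
  obtain rfl : S = twistedSum φ m := AddMonoidHom.ext hS
  exact ⟨twistedSum_surjective,
    fun f => (mem_shiftCoboundaries_iff f).trans (exists_congr fun _ => eq_comm),
    twistedSumQuotientEquiv, twistedSumQuotientEquiv_mk⟩
end

section
/- Let m, n be positive integers, M an abelian group with automorphism φ, and define μ-compatibility maps as follows: for x ∈ ⊕_{i ∈ ℤ/m} ℤ set μ_m(x) = Σ_{i ∈ ℤ/m} (x^{(i)}/2 + \bar i·x^{(i)}/m mod ℤ, -x^{(i)}/m) ∈ ℚ/ℤ ⊕ ℚ. Then μ_{mn} ∘ δ_m^n = μ_m, where δ_m^n : ⊕_{i ∈ ℤ/m} ℤ → ⊕_{j ∈ ℤ/mn} ℤ is given by δ_m^n(x)^{(j)} = x^{(j mod m)}. -/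
/-!
Write the representative of `j : ZMod (m * n)` as `i + m * k` with `i = j mod m` and `0 ≤ k < n`.
The fibre over `i` contributes `n` copies of `-x⁽ⁱ⁾/(mn)` to the second component, and to the
first `∑_{k<n} (x⁽ⁱ⁾/2 + (i + mk) x⁽ⁱ⁾/(mn)) = x⁽ⁱ⁾/2 + i x⁽ⁱ⁾/m + (n - 1) x⁽ⁱ⁾` by Gauss's
`∑_{k<n} k = n(n-1)/2`; the last term is an integer, so it vanishes in `ℚ/ℤ`.
-/

open Finset

namespace ZMod

variable {m n : ℕ} [NeZero m]

theorem val_natCast_val_add_mul (i : ZMod m) {k : ℕ} (hk : k < n) :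
    ((i.val + m * k : ℕ) : ZMod (m * n)).val = i.val + m * k :=
  val_cast_of_lt (Nat.add_mul_lt_mul_of_lt_of_lt (val_lt i) hk)

theorem castHom_natCast_val_add_mul (i : ZMod m) (k : ℕ) :
    castHom (dvd_mul_right m n) (ZMod m) ((i.val + m * k : ℕ) : ZMod (m * n)) = i := by
  rw [map_natCast, Nat.cast_add, Nat.cast_mul, natCast_self, zero_mul, add_zero,
    natCast_zmod_val]

theorem eq_and_eq_of_val_add_mul_eq {i i' : ZMod m} {k k' : ℕ}
    (h : i.val + m * k = i'.val + m * k') : i = i' ∧ k = k' := by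
  have hm := Nat.pos_of_neZero m
  obtain ⟨hk, hi⟩ := (Nat.div_mod_unique hm).2 ⟨rfl, val_lt i⟩
  obtain ⟨hk', hi'⟩ := (Nat.div_mod_unique hm).2 ⟨h.symm, val_lt i'⟩
  exact ⟨val_injective m (hi.symm.trans hi'), hk.symm.trans hk'⟩

theorem sum_mul_eq_sum_sum_range {M : Type*} [AddCommMonoid M] [NeZero (m * n)]
    (F : ZMod m → ℕ → M) :
    ∑ j : ZMod (m * n), F (castHom (dvd_mul_right m n) (ZMod m) j) j.val =
      ∑ i : ZMod m, ∑ k ∈ range n, F i (i.val + m * k) := by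
  set e : ZMod m × Fin n → ZMod (m * n) := fun p => ((p.1.val + m * p.2 : ℕ) : ZMod (m * n))
  have he_val (p : ZMod m × Fin n) : (e p).val = p.1.val + m * p.2 :=
    val_natCast_val_add_mul p.1 p.2.isLt
  have he_inj : Function.Injective e := fun p q hpq => by
    obtain ⟨h1, h2⟩ :=
      eq_and_eq_of_val_add_mul_eq ((he_val p).symm.trans ((congrArg val hpq).trans (he_val q)))
    exact Prod.ext h1 (Fin.ext h2)
  have he_bij : Function.Bijective e :=
    (Fintype.bijective_iff_injective_and_card e).2 ⟨he_inj, by simp [card]⟩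
  simp_rw [← Fin.sum_univ_eq_sum_range (F _ <| _ + m * ·), ← Fintype.sum_prod_type']
  refine (Fintype.sum_bijective e he_bij _ _ fun p => ?_).symm
  rw [he_val, castHom_natCast_val_add_mul]

end ZMod

variable {K : Type*} [Field K] [CharZero K]

theorem sum_range_natCast_div_self {n : ℕ} (hn : n ≠ 0) :
    ∑ k ∈ range n, (k : K) / n = (n - 1) / 2 := by
  have h := congrArg (Nat.cast : ℕ → K) (sum_range_id_mul_two n)
  push_cast [Nat.cast_sub (Nat.one_le_iff_ne_zero.2 hn)] at h
  rw [← sum_div, eq_div_iff two_ne_zero, div_mul_eq_mul_div, h]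
  field_simp

theorem sum_range_half_add_mul_div (a b m : K) (hm : m ≠ 0) {n : ℕ} (hn : n ≠ 0) :
    ∑ k ∈ range n, (a / 2 + (b + m * k) * a / (m * n)) = a / 2 + b * a / m + (n - 1) * a := by
  calc ∑ k ∈ range n, (a / 2 + (b + m * k) * a / (m * n))
      = ∑ k ∈ range n, ((a / 2 + b * a / (m * n)) + a * ((k : K) / n)) := by
        refine sum_congr rfl fun k _ => ?_
        field_simp
        ring
    _ = n * (a / 2 + b * a / (m * n)) + a * ((n - 1) / 2) := by
        rw [sum_add_distrib, ← mul_sum, sum_range_natCast_div_self hn, sum_const, card_range,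
          nsmul_eq_mul]
    _ = a / 2 + b * a / m + (n - 1) * a := by
        field_simp
        ring

theorem sum_range_mk_half_add_mul_div (a : ℤ) (b m : K) (hm : m ≠ 0) {n : ℕ} (hn : n ≠ 0) :
    ∑ k ∈ range n,
        ((a / 2 + (b + m * k) * a / (m * n) : K) : K ⧸ AddSubgroup.zmultiples (1 : K)) =
      ((a / 2 + b * a / m : K) : K ⧸ AddSubgroup.zmultiples (1 : K)) := by
  rw [← QuotientAddGroup.mk_sum, sum_range_half_add_mul_div _ _ _ hm hn]
  refine QuotientAddGroup.mk_add_of_mem _ ?_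
  exact_mod_cast AddSubgroup.intCast_mem_zmultiples_one ((n - 1 : ℤ) * a)

theorem stmt_13_general (m n : ℕ) [NeZero m] [NeZero (m * n)]
    (x : ZMod m → ℤ) :
    ((∑ j : ZMod (m * n),
        (QuotientAddGroup.mk
          ((x (ZMod.castHom ⟨n, rfl⟩ (ZMod m) j) : ℚ) / 2
            + (j.val : ℚ) * (x (ZMod.castHom ⟨n, rfl⟩ (ZMod m) j) : ℚ) / ((m : ℚ) * (n : ℚ))) :
          ℚ ⧸ AddSubgroup.zmultiples (1 : ℚ))),
      ∑ j : ZMod (m * n),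
        -((x (ZMod.castHom ⟨n, rfl⟩ (ZMod m) j) : ℚ)) / ((m : ℚ) * (n : ℚ)))
    = ((∑ i : ZMod m,
        (QuotientAddGroup.mk ((x i : ℚ) / 2 + (i.val : ℚ) * (x i : ℚ) / (m : ℚ)) :
          ℚ ⧸ AddSubgroup.zmultiples (1 : ℚ))),
      ∑ i : ZMod m, -((x i : ℚ)) / (m : ℚ)) := by
  have hm : (m : ℚ) ≠ 0 := Nat.cast_ne_zero.2 (NeZero.ne m)
  have hn : n ≠ 0 := right_ne_zero_of_mul (NeZero.ne (m * n))
  refine Prod.ext ?_ ?_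
  · refine (ZMod.sum_mul_eq_sum_sum_range fun i v =>
      ((x i / 2 + (v : ℚ) * x i / (m * n) : ℚ) : ℚ ⧸ AddSubgroup.zmultiples (1 : ℚ))).trans
      (sum_congr rfl fun i _ => ?_)
    push_cast
    exact sum_range_mk_half_add_mul_div (x i) (i.val : ℚ) (m : ℚ) hm hn
  · refine (ZMod.sum_mul_eq_sum_sum_range fun i _ => -(x i : ℚ) / (m * n)).trans
      (sum_congr rfl fun i _ => ?_)
    rw [sum_const, card_range, nsmul_eq_mul]
    field_simp

/-- With `μ_m : ⊕_{i ∈ ℤ/m} ℤ → ℚ/ℤ ⊕ ℚ`,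
`μ_m(x) = ∑_i (x⁽ⁱ⁾/2 + \bar i·x⁽ⁱ⁾/m mod ℤ, -x⁽ⁱ⁾/m)`, and
`δ_m^n : ⊕_{i ∈ ℤ/m} ℤ → ⊕_{j ∈ ℤ/mn} ℤ`, `δ_m^n(x)⁽ʲ⁾ = x⁽ʲ mod m⁾`, one has
`μ_{mn} ∘ δ_m^n = μ_m`. -/
theorem stmt_13 (m n : ℕ) [NeZero m] [NeZero n] [NeZero (m * n)]
    (x : ZMod m → ℤ) :
    ((∑ j : ZMod (m * n),
        (QuotientAddGroup.mk
          ((x (ZMod.castHom ⟨n, rfl⟩ (ZMod m) j) : ℚ) / 2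
            + (j.val : ℚ) * (x (ZMod.castHom ⟨n, rfl⟩ (ZMod m) j) : ℚ) / ((m : ℚ) * (n : ℚ))) :
          ℚ ⧸ AddSubgroup.zmultiples (1 : ℚ))),
      ∑ j : ZMod (m * n),
        -((x (ZMod.castHom ⟨n, rfl⟩ (ZMod m) j) : ℚ)) / ((m : ℚ) * (n : ℚ)))
    = ((∑ i : ZMod m,
        (QuotientAddGroup.mk ((x i : ℚ) / 2 + (i.val : ℚ) * (x i : ℚ) / (m : ℚ)) :
          ℚ ⧸ AddSubgroup.zmultiples (1 : ℚ))),
      ∑ i : ZMod m, -((x i : ℚ)) / (m : ℚ)) :=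
  stmt_13_general m n x
end
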